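/- arXiv:quant-ph/0611209 — 3 statements merged into one kernel-verified Lean document; each statement's English description precedes it below -/
import Mathlib

section
/- Let v ∈ {0,1}^n have Hamming weight k for even k with k ≤ 2αn. If M is drawn uniformly at random from the set of all α-matchings on [n] (viewed as an (αn)×n matrix over GF(2)), then the probability that there exists s ∈ {0,1}^{αn} with Mᵀs = v equals C(αn, k/2) / C(n, k). -/
open Finset

open scoped Classical

/-- `M` is an α-matching matrix: each row has exactly two ones, and rows have
pairwise disjoint supports (each column contains at most one 1). -/
def IsMatchingMatrix {m n : ℕ} (M : Matrix (Fin m) (Fin n) (ZMod 2)) : Prop :=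
  (∀ ℓ, (Finset.univ.filter fun i => M ℓ i ≠ 0).card = 2) ∧
  (∀ i, (Finset.univ.filter fun ℓ => M ℓ i ≠ 0).card ≤ 1)

/-!
Since the rows of a matching have disjoint supports, `vecMul s M` is the indicator of the union
of the rows selected by `s`; so `Mᵀs = v` is solvable exactly when `supp v` is a union of rows
of `M`. Count the pairs `(M, A)` of a matching `M` and a `k`-set `A` that is a union of rows of
`M`: each matching contributes `C(m, k/2)` sets (choose `k/2` of its rows), and since column
permutations act transitively on `k`-sets while preserving matchings, every `k`-set is a union
of rows for the same number of matchings. Hence the probability is `C(m, k/2) / C(n, k)`.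
-/

open Matrix Equiv

theorem ZMod.two_eq_of_filter_ne_zero_eq {X : Type*} [Fintype X] {f g : X → ZMod 2}
    (h : univ.filter (fun x => f x ≠ 0) = univ.filter fun x => g x ≠ 0) : f = g := by
  funext x
  have hx : f x ≠ 0 ↔ g x ≠ 0 := by simpa using congrArg (x ∈ ·) h
  exact (by decide : ∀ a b : ZMod 2, (a ≠ 0 ↔ b ≠ 0) → a = b) _ _ hx

theorem Finset.exists_perm_image_eq {α : Type*} [DecidableEq α] {A B : Finset α}
    (h : #A = #B) : ∃ σ : Perm α, A.image σ = B := by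
  obtain ⟨σ, hσ⟩ := (Set.powersetCard.isPretransitive (α := α) (n := #A)).exists_smul_eq
    ⟨A, rfl⟩ ⟨B, h.symm⟩
  exact ⟨σ, congrArg Subtype.val hσ⟩

namespace Matrix

variable {ι α R : Type*} [Fintype α] [DecidableEq R]

def rowSupport [Zero R] (M : Matrix ι α R) (ℓ : ι) : Finset α :=
  univ.filter fun i => M ℓ i ≠ 0

@[simp]
theorem mem_rowSupport [Zero R] {M : Matrix ι α R} {ℓ : ι} {i : α} :
    i ∈ M.rowSupport ℓ ↔ M ℓ i ≠ 0 := by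
  simp [rowSupport]

variable [DecidableEq α]

theorem rowSupport_submatrix [Zero R] (M : Matrix ι α R) (σ : Perm α) (ℓ : ι) :
    (M.submatrix id σ).rowSupport ℓ = (M.rowSupport ℓ).image σ.symm := by
  ext i
  rw [← σ.symm_apply_apply i, σ.symm.injective.mem_finset_image]
  simp

def IsRowUnion [Zero R] (M : Matrix ι α R) (A : Finset α) : Prop :=
  ∃ S : Finset ι, S.biUnion M.rowSupport = A

theorem isRowUnion_submatrix_iff [Zero R] {M : Matrix ι α R} (σ : Perm α) {A : Finset α} :
    (M.submatrix id σ).IsRowUnion A ↔ M.IsRowUnion (A.image σ) := by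
  refine exists_congr fun S => ?_
  rw [funext (rowSupport_submatrix M σ), ← biUnion_image,
    ← (image_injective σ.injective).eq_iff, image_image]
  simp

variable [Fintype ι]

theorem support_vecMul [Semiring R] [NoZeroDivisors R] {M : Matrix ι α R}
    (hcol : ∀ i ℓ ℓ', M ℓ i ≠ 0 → M ℓ' i ≠ 0 → ℓ = ℓ') (s : ι → R) :
    univ.filter (fun i => vecMul s M i ≠ 0) =
      (univ.filter fun ℓ => s ℓ ≠ 0).biUnion M.rowSupport := by
  ext i
  simp only [mem_filter, mem_univ, true_and, mem_biUnion, mem_rowSupport]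
  by_cases hi : ∃ ℓ, M ℓ i ≠ 0
  · obtain ⟨ℓ, hℓ⟩ := hi
    have hsum : vecMul s M i = s ℓ * M ℓ i :=
      sum_eq_single ℓ (fun ℓ' _ hne => by
        by_contra h
        exact hne (hcol i ℓ' ℓ (right_ne_zero_of_mul h) hℓ)) (by simp)
    rw [hsum, mul_ne_zero_iff]
    exact ⟨fun h => ⟨ℓ, h⟩, fun ⟨ℓ', hs, hM⟩ => ⟨hcol i ℓ' ℓ hM hℓ ▸ hs, hℓ⟩⟩
  · push Not at hi
    simp [vecMul, dotProduct, hi]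

theorem exists_vecMul_eq_iff_isRowUnion {M : Matrix ι α (ZMod 2)}
    (hcol : ∀ i ℓ ℓ', M ℓ i ≠ 0 → M ℓ' i ≠ 0 → ℓ = ℓ') (v : α → ZMod 2) :
    (∃ s, vecMul s M = v) ↔ M.IsRowUnion (univ.filter fun i => v i ≠ 0) := by
  constructor
  · rintro ⟨s, rfl⟩
    exact ⟨_, (support_vecMul hcol s).symm⟩
  · rintro ⟨S, hS⟩
    refine ⟨fun ℓ => if ℓ ∈ S then 1 else 0, ZMod.two_eq_of_filter_ne_zero_eq ?_⟩
    rw [support_vecMul hcol, ← hS]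
    congr
    ext ℓ
    simp

end Matrix

namespace IsMatchingMatrix

variable {m n : ℕ} {M : Matrix (Fin m) (Fin n) (ZMod 2)}

theorem card_rowSupport (hM : IsMatchingMatrix M) (ℓ : Fin m) : #(M.rowSupport ℓ) = 2 :=
  hM.1 ℓ

theorem eq_of_ne_zero (hM : IsMatchingMatrix M) (i : Fin n) (ℓ ℓ' : Fin m) (h : M ℓ i ≠ 0)
    (h' : M ℓ' i ≠ 0) : ℓ = ℓ' :=
  card_le_one.1 (hM.2 i) ℓ (by simpa using h) ℓ' (by simpa using h')

theorem card_biUnion_rowSupport (hM : IsMatchingMatrix M) (S : Finset (Fin m)) :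
    #(S.biUnion M.rowSupport) = 2 * #S := by
  rw [card_biUnion, sum_const_nat fun ℓ _ => hM.card_rowSupport ℓ, mul_comm]
  intro ℓ _ ℓ' _ hne
  exact disjoint_left.2 fun i hi hi' =>
    hne (hM.eq_of_ne_zero i ℓ ℓ' (mem_rowSupport.1 hi) (mem_rowSupport.1 hi'))

theorem biUnion_rowSupport_injective (hM : IsMatchingMatrix M) :
    Function.Injective fun S : Finset (Fin m) => S.biUnion M.rowSupport := by
  have hmem (S : Finset (Fin m)) (ℓ : Fin m) :
      ℓ ∈ S ↔ ∃ i ∈ S.biUnion M.rowSupport, M ℓ i ≠ 0 := by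
    constructor
    · intro hℓ
      obtain ⟨i, hi⟩ := card_pos.1 (hM.card_rowSupport ℓ ▸ two_pos)
      exact ⟨i, mem_biUnion.2 ⟨ℓ, hℓ, hi⟩, mem_rowSupport.1 hi⟩
    · rintro ⟨i, hi, hℓi⟩
      obtain ⟨ℓ', hℓ', hi'⟩ := mem_biUnion.1 hi
      rwa [hM.eq_of_ne_zero i ℓ ℓ' hℓi (mem_rowSupport.1 hi')]
  intro S T (hST : S.biUnion M.rowSupport = T.biUnion M.rowSupport)
  ext ℓ
  rw [hmem, hmem T, hST]

theorem card_filter_isRowUnion {k : ℕ} (hM : IsMatchingMatrix M) (hk : Even k) :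
    #{A ∈ powersetCard k univ | M.IsRowUnion A} = m.choose (k / 2) := by
  have hunions : {A ∈ powersetCard k (univ : Finset (Fin n)) | M.IsRowUnion A} =
      (powersetCard (k / 2) univ).image fun S => S.biUnion M.rowSupport := by
    ext A
    simp only [mem_filter, mem_powersetCard, subset_univ, true_and, mem_image]
    constructor
    · rintro ⟨hA, S, rfl⟩
      exact ⟨S, by rw [hM.card_biUnion_rowSupport] at hA; omega, rfl⟩
    · rintro ⟨S, hS, rfl⟩
      exact ⟨by rw [hM.card_biUnion_rowSupport, hS, Nat.two_mul_div_two_of_even hk], S, rfl⟩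
  rw [hunions, card_image_of_injective _ hM.biUnion_rowSupport_injective, card_powersetCard,
    card_univ, Fintype.card_fin]

theorem submatrix (hM : IsMatchingMatrix M) (σ : Perm (Fin n)) :
    IsMatchingMatrix (M.submatrix id σ) := by
  refine ⟨fun ℓ => ?_, fun i => hM.2 (σ i)⟩
  change #((M.submatrix id σ).rowSupport ℓ) = 2
  rw [rowSupport_submatrix, card_image_of_injective _ σ.symm.injective, hM.card_rowSupport]

end IsMatchingMatrix

theorem isMatchingMatrix_submatrix_iff {m n : ℕ} {M : Matrix (Fin m) (Fin n) (ZMod 2)}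
    (σ : Perm (Fin n)) : IsMatchingMatrix (M.submatrix id σ) ↔ IsMatchingMatrix M :=
  ⟨fun h => by simpa using h.submatrix σ.symm, fun h => h.submatrix σ⟩

section Counting

variable {m n : ℕ}

theorem card_isMatchingMatrix_isRowUnion_eq {A B : Finset (Fin n)} (h : #A = #B) :
    #{M : Matrix (Fin m) (Fin n) (ZMod 2) | IsMatchingMatrix M ∧ M.IsRowUnion A} =
      #{M : Matrix (Fin m) (Fin n) (ZMod 2) | IsMatchingMatrix M ∧ M.IsRowUnion B} := by
  obtain ⟨σ, hσ⟩ := exists_perm_image_eq h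
  refine (card_equiv (reindex (Equiv.refl _) σ.symm) fun M => ?_).symm
  simp [reindex_apply, isMatchingMatrix_submatrix_iff, isRowUnion_submatrix_iff, hσ]

theorem card_isMatchingMatrix_mul_choose {k : ℕ} {A : Finset (Fin n)} (hA : #A = k)
    (hk : Even k) :
    #{M : Matrix (Fin m) (Fin n) (ZMod 2) | IsMatchingMatrix M} * m.choose (k / 2) =
      n.choose k *
        #{M : Matrix (Fin m) (Fin n) (ZMod 2) | IsMatchingMatrix M ∧ M.IsRowUnion A} := by
  have hcount := card_mul_eq_card_mul
    (fun (M : Matrix (Fin m) (Fin n) (ZMod 2)) (B : Finset (Fin n)) => M.IsRowUnion B)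
    (s := {M : Matrix (Fin m) (Fin n) (ZMod 2) | IsMatchingMatrix M})
    (t := powersetCard k univ)
    (fun M hM => (mem_filter.1 hM).2.card_filter_isRowUnion hk)
    (fun B hB => by
      rw [bipartiteBelow, filter_filter,
        card_isMatchingMatrix_isRowUnion_eq ((mem_powersetCard.1 hB).2.trans hA.symm)])
  rwa [card_powersetCard, card_univ, Fintype.card_fin] at hcount

theorem exists_isMatchingMatrix (h : 2 * m ≤ n) :
    ∃ M : Matrix (Fin m) (Fin n) (ZMod 2), IsMatchingMatrix M := by
  refine ⟨Matrix.of fun ℓ i => if (i : ℕ) / 2 = ℓ then 1 else 0, fun ℓ => ?_, fun i => ?_⟩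
  · have hrow : (univ.filter fun i : Fin n => (i : ℕ) / 2 = ℓ) =
        {⟨2 * ℓ, by omega⟩, ⟨2 * ℓ + 1, by omega⟩} := by
      ext i
      simp only [mem_filter, mem_univ, true_and, mem_insert, mem_singleton, Fin.ext_iff]
      omega
    simp [hrow]
  · refine card_le_one.2 fun ℓ hℓ ℓ' hℓ' => ?_
    simp only [mem_filter, mem_univ, true_and, of_apply, ne_eq, ite_eq_right_iff,
      one_ne_zero, imp_false, not_not] at hℓ hℓ'
    exact Fin.ext (hℓ.symm.trans hℓ')

end Counting

theorem matching_probability_general {m n k : ℕ} (h2m : 2 * m ≤ n)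
    (v : Fin n → ZMod 2) (hk : (Finset.univ.filter fun i => v i ≠ 0).card = k)
    (hkeven : Even k) :
    ((Finset.univ.filter (fun M : Matrix (Fin m) (Fin n) (ZMod 2) =>
          IsMatchingMatrix M ∧ ∃ s : Fin m → ZMod 2, Matrix.vecMul s M = v)).card : ℝ)
      / ((Finset.univ.filter (fun M : Matrix (Fin m) (Fin n) (ZMod 2) =>
          IsMatchingMatrix M)).card : ℝ)
    = (Nat.choose m (k / 2) : ℝ) / (Nat.choose n k : ℝ) := by
  have hsolvable : (univ.filter fun M : Matrix (Fin m) (Fin n) (ZMod 2) =>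
        IsMatchingMatrix M ∧ ∃ s, vecMul s M = v) =
      univ.filter fun M => IsMatchingMatrix M ∧ M.IsRowUnion (univ.filter fun i => v i ≠ 0) :=
    filter_congr fun M _ => and_congr_right fun hM =>
      exists_vecMul_eq_iff_isRowUnion hM.eq_of_ne_zero v
  obtain ⟨M₀, hM₀⟩ := exists_isMatchingMatrix h2m
  have hmatchings : (#{M : Matrix (Fin m) (Fin n) (ZMod 2) | IsMatchingMatrix M} : ℝ) ≠ 0 :=
    Nat.cast_ne_zero.2 (card_pos.2 ⟨M₀, mem_filter.2 ⟨mem_univ _, hM₀⟩⟩).ne'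
  have hchoose : (n.choose k : ℝ) ≠ 0 :=
    Nat.cast_ne_zero.2
      (Nat.choose_pos (hk ▸ card_le_univ _ |>.trans_eq (Fintype.card_fin n))).ne'
  have hcount := card_isMatchingMatrix_mul_choose (m := m) hk hkeven
  rw [hsolvable, div_eq_div_iff hmatchings hchoose]
  norm_cast
  linarith

/-- If `v` has Hamming weight `k`, `k` even, then the probability over a uniform
α-matching `M` (with `m = αn` edges) that `∃ s, Mᵀs = v` equals `C(m, k/2)/C(n, k)`. -/
theorem matching_probability {m n k : ℕ} (hm : 0 < m) (h2m : 2 * m ≤ n)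
    (v : Fin n → ZMod 2) (hk : (Finset.univ.filter fun i => v i ≠ 0).card = k)
    (hkeven : Even k) (hk2m : k ≤ 2 * m) :
    ((Finset.univ.filter (fun M : Matrix (Fin m) (Fin n) (ZMod 2) =>
          IsMatchingMatrix M ∧ ∃ s : Fin m → ZMod 2, Matrix.vecMul s M = v)).card : ℝ)
      / ((Finset.univ.filter (fun M : Matrix (Fin m) (Fin n) (ZMod 2) =>
          IsMatchingMatrix M)).card : ℝ)
    = (Nat.choose m (k / 2) : ℝ) / (Nat.choose n k : ℝ) :=
  matching_probability_general h2m v hk hkeven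
end

section
/- Under the hypotheses of the main theorem (A ⊆ {0,1}^n with |A| ≥ 2^{n-c}, c ≥ 1, α ∈ (0,1/4], M uniform over α-matchings), the expected squared total variation distance satisfies E_M[‖p_M - U‖²_tvd] ≤ (2^{2n}/|A|²) ∑_{even k=2}^{2αn} (C(αn,k/2)/C(n,k)) ∑_{v:|v|=k} f̂(v)², where f is the characteristic function of A. -/
open Finset

open scoped Classical

noncomputable def boolFourier {n : ℕ} (f : (Fin n → ZMod 2) → ℝ) (s : Fin n → ZMod 2) : ℝ :=
  ((2 : ℝ) ^ n)⁻¹ * ∑ y : Fin n → ZMod 2, f y * (-1 : ℝ) ^ (∑ i, y i * s i : ZMod 2).val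

lemma zmod2_all : ∀ a : ZMod 2, a ≠ 0 → a = 1 := by decide

lemma neg_one_val_add (a b : ZMod 2) :
    ((-1:ℝ))^((a+b).val) = (-1)^a.val * (-1)^b.val := by
  rw [ZMod.val_add, ← neg_one_pow_eq_pow_mod_two, pow_add]

lemma orth {k : ℕ} (y : Fin k → ZMod 2) (hy : y ≠ 0) :
    ∑ z : Fin k → ZMod 2, ((-1:ℝ))^((∑ i, z i * y i).val) = 0 := by
  obtain ⟨i0, hi0⟩ : ∃ i, y i ≠ 0 := by
    by_contra h; push_neg at h; exact hy (funext fun i => h i)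
  set δ : Fin k → ZMod 2 := Pi.single i0 1 with hδ
  have key : ∀ z : Fin k → ZMod 2,
      ((-1:ℝ))^((∑ i, (z + δ) i * y i).val) = -((-1:ℝ))^((∑ i, z i * y i).val) := by
    intro z
    have h1 : (∑ i, (z + δ) i * y i) = (∑ i, z i * y i) + 1 := by
      have he : ∀ i, (z + δ) i * y i = z i * y i + δ i * y i := by
        intro i; simp [add_mul]
      rw [Finset.sum_congr rfl fun i _ => he i, Finset.sum_add_distrib]
      congr 1
      rw [hδ, Finset.sum_eq_single i0]
      · simp [zmod2_all _ hi0]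
      · intro b _ hb; simp [Pi.single_eq_of_ne hb]
      · simp
    rw [h1, neg_one_val_add]
    norm_num [ZMod.val_one]
  have h2 : ∑ z : Fin k → ZMod 2, ((-1:ℝ))^((∑ i, (z + δ) i * y i).val)
      = ∑ z : Fin k → ZMod 2, ((-1:ℝ))^((∑ i, z i * y i).val) :=
    Fintype.sum_equiv (Equiv.addRight δ) _ _ (fun z => by rw [Equiv.coe_addRight])
  simp only [key, Finset.sum_neg_distrib] at h2
  linarith

lemma zmod2_neg : ∀ a : ZMod 2, -a = a := by decide

lemma orthIf {k : ℕ} (y : Fin k → ZMod 2) :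
    ∑ z : Fin k → ZMod 2, ((-1:ℝ))^((∑ i, z i * y i).val) = if y = 0 then (2:ℝ)^k else 0 := by
  split_ifs with h
  · subst h
    simp [Finset.card_univ]
  · exact orth y h

lemma zmod2_add_eq_zero {k : ℕ} (z w : Fin k → ZMod 2) : z + w = 0 ↔ w = z := by
  constructor
  · intro h
    have h2 := eq_neg_of_add_eq_zero_right h
    rw [h2]; funext i; exact zmod2_neg (z i)
  · intro h; subst h; funext i
    have h2 : ∀ a : ZMod 2, a + a = 0 := by decide
    exact h2 _

lemma orthIf' {k : ℕ} (y : Fin k → ZMod 2) :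
    ∑ z : Fin k → ZMod 2, ((-1:ℝ))^((∑ i, y i * z i).val) = if y = 0 then (2:ℝ)^k else 0 := by
  rw [← orthIf y]
  refine Finset.sum_congr rfl fun z _ => ?_
  congr 1
  exact congrArg ZMod.val (Finset.sum_congr rfl fun i _ => mul_comm _ _)

lemma parseval {k : ℕ} (g : (Fin k → ZMod 2) → ℝ) :
    (2:ℝ)^k * ∑ s : Fin k → ZMod 2,
      (((2:ℝ)^k)⁻¹ * ∑ z : Fin k → ZMod 2, g z * (-1:ℝ)^((∑ i, z i * s i).val))^2
    = ∑ z : Fin k → ZMod 2, (g z)^2 := by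
  set c : ℝ := ((2:ℝ)^k)⁻¹ with hc
  set S : ℝ := ∑ s : Fin k → ZMod 2, ∑ z : Fin k → ZMod 2, ∑ w : Fin k → ZMod 2,
      g z * g w * (-1:ℝ)^((∑ i, (z + w) i * s i).val) with hS
  have key : ∀ s : Fin k → ZMod 2,
      (∑ z : Fin k → ZMod 2, g z * (-1:ℝ)^((∑ i, z i * s i).val))^2
      = ∑ z : Fin k → ZMod 2, ∑ w : Fin k → ZMod 2,
          g z * g w * (-1:ℝ)^((∑ i, (z + w) i * s i).val) := by
    intro s
    rw [sq, Finset.sum_mul_sum]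
    refine Finset.sum_congr rfl fun z _ => Finset.sum_congr rfl fun w _ => ?_
    have h1 : (∑ i, (z + w) i * s i) = (∑ i, z i * s i) + (∑ i, w i * s i) := by
      rw [← Finset.sum_add_distrib]
      exact Finset.sum_congr rfl fun i _ => by simp [add_mul]
    rw [h1, neg_one_val_add]; ring
  have ha : (2:ℝ)^k * ∑ s : Fin k → ZMod 2,
      (c * ∑ z : Fin k → ZMod 2, g z * (-1:ℝ)^((∑ i, z i * s i).val))^2
      = ((2:ℝ)^k * c^2) * S := by
    rw [hS, Finset.mul_sum, Finset.mul_sum]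
    refine Finset.sum_congr rfl fun s _ => ?_
    rw [mul_pow, key s]; ring
  have hb : S = (2:ℝ)^k * ∑ z : Fin k → ZMod 2, (g z)^2 := by
    rw [hS, Finset.sum_comm, Finset.mul_sum]
    refine Finset.sum_congr rfl fun z _ => ?_
    rw [Finset.sum_comm]
    have inner : ∀ w : Fin k → ZMod 2,
        ∑ s : Fin k → ZMod 2, g z * g w * (-1:ℝ)^((∑ i, (z + w) i * s i).val)
        = if w = z then (2:ℝ)^k * (g z)^2 else 0 := by
      intro w
      rw [← Finset.mul_sum, orthIf']
      rcases eq_or_ne w z with h|h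
      · subst h
        rw [if_pos rfl, if_pos (by funext i; exact (by decide : ∀ a : ZMod 2, a + a = 0) _)]
        ring
      · rw [if_neg h, if_neg (fun h0 => h ((zmod2_add_eq_zero z w).mp h0))]
        ring
    rw [Finset.sum_congr rfl fun w _ => inner w, Finset.sum_ite_eq' Finset.univ z]
    simp
  rw [ha, hb, hc]
  have h2k : (2:ℝ)^k ≠ 0 := by positivity
  field_simp

def tmul {m n : ℕ} (M : Matrix (Fin m) (Fin n) (ZMod 2)) (s : Fin m → ZMod 2) :
    Fin n → ZMod 2 := fun i => ∑ ℓ, M ℓ i * s ℓ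

lemma card_weight {t k : ℕ} :
    (Finset.univ.filter fun v : Fin t → ZMod 2 =>
      (Finset.univ.filter fun i => v i ≠ 0).card = k).card = Nat.choose t k := by
  have hpc := Finset.card_powersetCard k (Finset.univ : Finset (Fin t))
  rw [Finset.card_univ, Fintype.card_fin] at hpc
  rw [← hpc]
  refine Finset.card_bij' (fun v _ => Finset.univ.filter fun i => v i ≠ 0)
    (fun S _ => fun i => if i ∈ S then 1 else 0) ?_ ?_ ?_ ?_
  · intro v hv
    rw [Finset.mem_powersetCard_univ]
    exact (Finset.mem_filter.mp hv).2
  · intro S hS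
    rw [Finset.mem_filter]
    refine ⟨Finset.mem_univ _, ?_⟩
    have h2 : (Finset.univ.filter fun i => (if i ∈ S then (1:ZMod 2) else 0) ≠ 0) = S := by
      ext i
      by_cases h : i ∈ S <;> simp [h]
    rw [h2]
    exact (Finset.mem_powersetCard_univ.mp hS)
  · intro v hv
    funext i
    by_cases h : v i ≠ 0
    · simp [h, (zmod2_all _ h).symm]
    · push_neg at h
      simp [h]
  · intro S hS
    ext i
    by_cases h : i ∈ S <;> simp [h]

lemma card_filter_comp_perm {t : ℕ} (p : Fin t → Prop) [DecidablePred p] (e : Equiv.Perm (Fin t)) :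
    (Finset.univ.filter fun i => p (e i)).card = (Finset.univ.filter p).card := by
  apply Finset.card_bij (fun i _ => e i)
  · intro i hi
    simpa using (Finset.mem_filter.mp hi).2
  · intro i _ j _ h
    exact e.injective h
  · intro b hb
    refine ⟨e.symm b, ?_, by simp⟩
    simp only [Finset.mem_filter, Finset.mem_univ, true_and, Equiv.apply_symm_apply]
    simpa using (Finset.mem_filter.mp hb).2

lemma wt_tmul {m n : ℕ} {M : Matrix (Fin m) (Fin n) (ZMod 2)} (hM : IsMatchingMatrix M)
    (s : Fin m → ZMod 2) :
    (Finset.univ.filter fun i => tmul M s i ≠ 0).card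
      = 2 * (Finset.univ.filter fun ℓ => s ℓ ≠ 0).card := by
  have colsub : ∀ i (ℓ ℓ' : Fin m), M ℓ i ≠ 0 → M ℓ' i ≠ 0 → ℓ' = ℓ := by
    intro i ℓ ℓ' h h'
    exact Finset.card_le_one.mp (hM.2 i) ℓ' (Finset.mem_filter.mpr ⟨Finset.mem_univ _, h'⟩)
      ℓ (Finset.mem_filter.mpr ⟨Finset.mem_univ _, h⟩)
  have hval : ∀ (i : Fin n) (ℓ : Fin m), M ℓ i ≠ 0 → tmul M s i = s ℓ := by
    intro i ℓ h
    unfold tmul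
    rw [Finset.sum_eq_single ℓ]
    · rw [zmod2_all _ h, one_mul]
    · intro b _ hb
      have : M b i = 0 := by
        by_contra hb2
        exact hb (colsub i ℓ b h hb2)
      rw [this, zero_mul]
    · intro h2; exact absurd (Finset.mem_univ ℓ) h2
  have hD : (Finset.univ.filter fun i => tmul M s i ≠ 0)
      = (Finset.univ.filter fun ℓ => s ℓ ≠ 0).biUnion
          (fun ℓ => Finset.univ.filter fun i => M ℓ i ≠ 0) := by
    ext i
    simp only [Finset.mem_filter, Finset.mem_biUnion, Finset.mem_univ, true_and]
    constructor
    · intro h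
      by_contra hc
      push_neg at hc
      apply h
      unfold tmul
      apply Finset.sum_eq_zero
      intro ℓ _
      by_cases hℓ : M ℓ i = 0
      · rw [hℓ, zero_mul]
      · have : s ℓ = 0 := by
          by_contra hs
          exact absurd (hc ℓ hs) hℓ
        rw [this, mul_zero]
    · rintro ⟨ℓ, hs, hMl⟩
      rw [hval i ℓ hMl]
      exact hs
  rw [hD, Finset.card_biUnion]
  · rw [Finset.sum_congr rfl fun ℓ _ => hM.1 ℓ, Finset.sum_const, smul_eq_mul, mul_comm]
  · intro ℓ1 _ ℓ2 _ hne
    rw [Function.onFun_apply, Finset.disjoint_left]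
    intro i hi1 hi2
    exact hne (colsub i ℓ2 ℓ1 (Finset.mem_filter.mp hi2).2 (Finset.mem_filter.mp hi1).2)

lemma exists_perm_comp {t : ℕ} (v v' : Fin t → ZMod 2)
    (h : (Finset.univ.filter fun i => v i ≠ 0).card
        = (Finset.univ.filter fun i => v' i ≠ 0).card) :
    ∃ e : Equiv.Perm (Fin t), ∀ i, v (e i) = v' i := by
  set P : Fin t → Prop := fun i => v i ≠ 0 with hP
  set P' : Fin t → Prop := fun i => v' i ≠ 0 with hP'
  have hcard : Fintype.card {i // P' i} = Fintype.card {i // P i} := by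
    rw [Fintype.card_subtype, Fintype.card_subtype, ← h]
  have hcardc : Fintype.card {i // ¬ P' i} = Fintype.card {i // ¬ P i} := by
    have a1 : Fintype.card {i // ¬ P' i}
        = Fintype.card (Fin t) - Fintype.card {i // P' i} := Fintype.card_subtype_compl P'
    have a2 : Fintype.card {i // ¬ P i}
        = Fintype.card (Fin t) - Fintype.card {i // P i} := Fintype.card_subtype_compl P
    rw [a1, a2, hcard]
  set e1 := Fintype.equivOfCardEq hcard
  set e2 := Fintype.equivOfCardEq hcardc
  refine ⟨(Equiv.sumCompl P').symm.trans ((Equiv.sumCongr e1 e2).trans (Equiv.sumCompl P)), ?_⟩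
  intro i
  by_cases hp : P' i
  · have he : ((Equiv.sumCompl P').symm.trans ((Equiv.sumCongr e1 e2).trans (Equiv.sumCompl P))) i
        = (e1 ⟨i, hp⟩ : Fin t) := by
      simp [Equiv.sumCompl_symm_apply_of_pos hp]
    rw [he, zmod2_all _ (e1 ⟨i, hp⟩).prop, zmod2_all _ hp]
  · have he : ((Equiv.sumCompl P').symm.trans ((Equiv.sumCongr e1 e2).trans (Equiv.sumCompl P))) i
        = (e2 ⟨i, hp⟩ : Fin t) := by
      simp [Equiv.sumCompl_symm_apply_of_neg hp]
    have h1 : v ((e2 ⟨i, hp⟩ : Fin t)) = 0 := by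
      have := (e2 ⟨i, hp⟩).prop
      simpa [hP] using this
    have h2 : v' i = 0 := by simpa [hP'] using hp
    rw [he, h1, h2]

lemma cnt_eq_of_perm {m n : ℕ} (s : Fin m → ZMod 2) (v v' : Fin n → ZMod 2)
    (e : Equiv.Perm (Fin n)) (hv : ∀ i, v (e i) = v' i) :
    ((Finset.univ.filter fun M : Matrix (Fin m) (Fin n) (ZMod 2) =>
        IsMatchingMatrix M ∧ tmul M s = v).card)
    = ((Finset.univ.filter fun M : Matrix (Fin m) (Fin n) (ZMod 2) =>
        IsMatchingMatrix M ∧ tmul M s = v').card) := by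
  apply Finset.card_bij (fun M _ => Matrix.of fun ℓ i => M ℓ (e i))
  · intro M hM
    obtain ⟨hmm, hts⟩ := (Finset.mem_filter.mp hM).2
    rw [Finset.mem_filter]
    refine ⟨Finset.mem_univ _, ⟨?_, ?_⟩, ?_⟩
    · intro ℓ
      exact (card_filter_comp_perm (fun i => M ℓ i ≠ 0) e).trans (hmm.1 ℓ)
    · intro i
      exact hmm.2 (e i)
    · funext i
      have : tmul (Matrix.of fun ℓ i => M ℓ (e i)) s i = tmul M s (e i) := rfl
      rw [this, hts]
      exact hv i
  · intro M1 _ M2 _ hΦ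
    funext ℓ i
    have := congrFun (congrFun hΦ ℓ) (e.symm i)
    simpa using this
  · intro N hN
    obtain ⟨hmm, hts⟩ := (Finset.mem_filter.mp hN).2
    refine ⟨Matrix.of fun ℓ i => N ℓ (e.symm i), ?_, ?_⟩
    · rw [Finset.mem_filter]
      refine ⟨Finset.mem_univ _, ⟨?_, ?_⟩, ?_⟩
      · intro ℓ
        exact (card_filter_comp_perm (fun i => N ℓ i ≠ 0) e.symm).trans (hmm.1 ℓ)
      · intro i
        exact hmm.2 (e.symm i)
      · funext i
        have h1 : tmul (Matrix.of fun ℓ i => N ℓ (e.symm i)) s i = tmul N s (e.symm i) := rfl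
        rw [h1, hts]
        have h3 := hv (e.symm i)
        rw [Equiv.apply_symm_apply] at h3
        exact h3.symm
    · funext ℓ i
      simp

lemma matchings_card_eq {m n : ℕ} (s : Fin m → ZMod 2) (j : ℕ)
    (hs : (Finset.univ.filter fun ℓ => s ℓ ≠ 0).card = j)
    (v : Fin n → ZMod 2) (hv : (Finset.univ.filter fun i => v i ≠ 0).card = 2*j) :
    (Finset.univ.filter fun M : Matrix (Fin m) (Fin n) (ZMod 2) =>
        IsMatchingMatrix M).card
    = Nat.choose n (2*j) *
      (Finset.univ.filter fun M : Matrix (Fin m) (Fin n) (ZMod 2) =>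
        IsMatchingMatrix M ∧ tmul M s = v).card := by
  classical
  set F := Finset.univ.filter fun M : Matrix (Fin m) (Fin n) (ZMod 2) => IsMatchingMatrix M
  set V := Finset.univ.filter fun v' : Fin n → ZMod 2 =>
    (Finset.univ.filter fun i => v' i ≠ 0).card = 2*j with hV
  have hmap : ∀ M ∈ F, tmul M s ∈ V := by
    intro M hM
    rw [Finset.mem_filter]
    exact ⟨Finset.mem_univ _, by rw [wt_tmul (Finset.mem_filter.mp hM).2 s, hs]⟩
  have h1 : F.card = ∑ v' ∈ V, (F.filter fun M => tmul M s = v').card :=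
    Finset.card_eq_sum_card_fiberwise hmap
  have h2 : ∀ v' ∈ V, (F.filter fun M => tmul M s = v').card
      = (Finset.univ.filter fun M : Matrix (Fin m) (Fin n) (ZMod 2) =>
          IsMatchingMatrix M ∧ tmul M s = v).card := by
    intro v' hv'
    have hw : (Finset.univ.filter fun i => v' i ≠ 0).card
        = (Finset.univ.filter fun i => v i ≠ 0).card := by
      rw [hv, (Finset.mem_filter.mp hv').2]
    obtain ⟨e, he⟩ := exists_perm_comp v' v hw
    have hff : F.filter (fun M => tmul M s = v')
        = Finset.univ.filter fun M : Matrix (Fin m) (Fin n) (ZMod 2) =>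
          IsMatchingMatrix M ∧ tmul M s = v' := by
      rw [Finset.filter_filter]
    rw [hff]
    exact cnt_eq_of_perm s v' v e he
  rw [h1, Finset.sum_congr rfl h2, Finset.sum_const, smul_eq_mul]
  congr 1
  rw [hV, card_weight]

lemma sumA_eq {n : ℕ} (A : Finset (Fin n → ZMod 2)) (f : (Fin n → ZMod 2) → ℝ)
    (hf : ∀ x, f x = if x ∈ A then 1 else 0) (v : Fin n → ZMod 2) :
    ∑ x ∈ A, (-1:ℝ)^((∑ i, x i * v i).val) = (2:ℝ)^n * boolFourier f v := by
  unfold boolFourier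
  rw [← mul_assoc, mul_inv_cancel₀ (by positivity : ((2:ℝ)^n) ≠ 0), one_mul]
  rw [show (∑ y : Fin n → ZMod 2, f y * (-1:ℝ)^((∑ i, y i * v i).val))
      = ∑ y : Fin n → ZMod 2, if y ∈ A then (-1:ℝ)^((∑ i, y i * v i).val) else 0 from
    Finset.sum_congr rfl fun y _ => by rw [hf y]; split_ifs <;> simp]
  rw [Finset.sum_ite_mem, Finset.univ_inter]

lemma hat_p {m n : ℕ} (M : Matrix (Fin m) (Fin n) (ZMod 2))
    (A : Finset (Fin n → ZMod 2)) (f : (Fin n → ZMod 2) → ℝ)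
    (hf : ∀ x, f x = if x ∈ A then 1 else 0) (s : Fin m → ZMod 2) :
    ∑ z : Fin m → ZMod 2, ((A.filter fun x => M.mulVec x = z).card : ℝ) *
        (-1:ℝ)^((∑ ℓ, z ℓ * s ℓ).val)
    = (2:ℝ)^n * boolFourier f (tmul M s) := by
  rw [← sumA_eq A f hf (tmul M s)]
  rw [← Finset.sum_fiberwise_of_maps_to (fun x _ => Finset.mem_univ (M.mulVec x))
    (fun x => (-1:ℝ)^((∑ i, x i * tmul M s i).val))]
  refine Finset.sum_congr rfl fun z _ => ?_
  have hterm : ∀ x ∈ A.filter fun x => M.mulVec x = z,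
      (-1:ℝ)^((∑ i, x i * tmul M s i).val) = (-1:ℝ)^((∑ ℓ, z ℓ * s ℓ).val) := by
    intro x hx
    have hxz : M.mulVec x = z := (Finset.mem_filter.mp hx).2
    have hdot : (∑ i, x i * tmul M s i) = ∑ ℓ, z ℓ * s ℓ := by
      rw [← hxz]
      unfold tmul
      have lhs_eq : ∑ i, x i * ∑ ℓ, M ℓ i * s ℓ = ∑ i, ∑ ℓ, x i * (M ℓ i * s ℓ) :=
        Finset.sum_congr rfl fun i _ => by rw [Finset.mul_sum]
      have rhs_eq : ∑ ℓ, M.mulVec x ℓ * s ℓ = ∑ ℓ, ∑ i, x i * (M ℓ i * s ℓ) := by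
        refine Finset.sum_congr rfl fun ℓ _ => ?_
        rw [Matrix.mulVec, dotProduct, Finset.sum_mul]
        exact Finset.sum_congr rfl fun i _ => by ring
      rw [lhs_eq, rhs_eq, Finset.sum_comm]
    rw [hdot]
  rw [Finset.sum_congr rfl hterm, Finset.sum_const, nsmul_eq_mul]

lemma perM_bound {m n : ℕ} (M : Matrix (Fin m) (Fin n) (ZMod 2))
    (A : Finset (Fin n → ZMod 2)) (hApos : (0:ℝ) < (A.card : ℝ))
    (f : (Fin n → ZMod 2) → ℝ) (hf : ∀ x, f x = if x ∈ A then 1 else 0) :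
    (∑ z : Fin m → ZMod 2,
        |((A.filter fun x => M.mulVec x = z).card : ℝ) / (A.card : ℝ) - ((2:ℝ)^m)⁻¹|)^2
    ≤ (2:ℝ)^(2*n) / (A.card:ℝ)^2 *
        ∑ s ∈ Finset.univ.filter (fun s : Fin m → ZMod 2 => ¬ s = 0),
          (boolFourier f (tmul M s))^2 := by
  set a : ℝ := (A.card : ℝ) with haa
  set g : (Fin m → ZMod 2) → ℝ := fun z =>
    ((A.filter fun x => M.mulVec x = z).card : ℝ) / a - ((2:ℝ)^m)⁻¹ with hg
  have hane : a ≠ 0 := ne_of_gt hApos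
  have hcard : ((Finset.univ : Finset (Fin m → ZMod 2)).card : ℝ) = 2^m := by
    rw [Finset.card_univ]
    simp
  -- Cauchy–Schwarz
  have hCS : (∑ z : Fin m → ZMod 2, |g z|)^2 ≤ (2:ℝ)^m * ∑ z : Fin m → ZMod 2, (g z)^2 := by
    have h := Finset.sum_mul_sq_le_sq_mul_sq Finset.univ (fun _ => (1:ℝ))
      (fun z : Fin m → ZMod 2 => |g z|)
    simp only [one_mul, one_pow, sq_abs] at h
    rwa [Finset.sum_const, nsmul_eq_mul, mul_one, hcard] at h
  -- value of the Fourier coefficient of g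
  have hhat : ∀ s : Fin m → ZMod 2,
      ∑ z : Fin m → ZMod 2, g z * (-1:ℝ)^((∑ i, z i * s i).val)
      = a⁻¹ * ((2:ℝ)^n * boolFourier f (tmul M s)) - (if s = 0 then 1 else 0) := by
    intro s
    have hsplit : ∑ z : Fin m → ZMod 2, g z * (-1:ℝ)^((∑ i, z i * s i).val)
        = a⁻¹ * ∑ z : Fin m → ZMod 2,
            ((A.filter fun x => M.mulVec x = z).card : ℝ) * (-1:ℝ)^((∑ i, z i * s i).val)
          - ((2:ℝ)^m)⁻¹ * ∑ z : Fin m → ZMod 2, (-1:ℝ)^((∑ i, z i * s i).val) := by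
      rw [Finset.mul_sum, Finset.mul_sum, ← Finset.sum_sub_distrib]
      refine Finset.sum_congr rfl fun z _ => ?_
      rw [hg]
      field_simp
    rw [hsplit, hat_p M A f hf s, orthIf]
    split_ifs with h
    · rw [mul_comm]
      congr 1
      rw [inv_mul_cancel₀ (by positivity : ((2:ℝ)^m) ≠ 0)]
    · rw [mul_zero, mul_comm]
  -- the zero coefficient vanishes
  have hsum_fibers : ∑ z : Fin m → ZMod 2,
      ((A.filter fun x => M.mulVec x = z).card : ℝ) = a := by
    rw [haa]
    norm_cast
    exact (Finset.card_eq_sum_card_fiberwise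
      (fun x _ => Finset.mem_univ (M.mulVec x))).symm
  have hbf0 : (2:ℝ)^n * boolFourier f (tmul M 0) = a := by
    have ht0 : tmul M 0 = 0 := by
      funext i; simp [tmul]
    rw [ht0, ← sumA_eq A f hf 0]
    rw [haa]
    rw [Finset.sum_congr rfl (fun x _ => by simp : ∀ x ∈ A,
      (-1:ℝ)^((∑ i, x i * (0 : Fin n → ZMod 2) i).val) = 1)]
    simp
  have hg0 : ∑ z : Fin m → ZMod 2, g z * (-1:ℝ)^((∑ i, z i * (0 : Fin m → ZMod 2) i).val)
      = 0 := by
    rw [hhat 0, hbf0, if_pos rfl, inv_mul_cancel₀ hane, sub_self]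
  -- Parseval
  have hPar := parseval g
  -- split off the zero frequency
  have hsplit0 : ∑ s : Fin m → ZMod 2,
      (((2:ℝ)^m)⁻¹ * ∑ z : Fin m → ZMod 2, g z * (-1:ℝ)^((∑ i, z i * s i).val))^2
      = ∑ s ∈ Finset.univ.filter (fun s : Fin m → ZMod 2 => ¬ s = 0),
          (((2:ℝ)^m)⁻¹ * ∑ z : Fin m → ZMod 2, g z * (-1:ℝ)^((∑ i, z i * s i).val))^2 := by
    rw [← Finset.sum_filter_add_sum_filter_not Finset.univ (fun s : Fin m → ZMod 2 => s = 0)]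
    have hfe : (Finset.univ.filter (fun s : Fin m → ZMod 2 => s = 0)) = {0} := by
      ext s; simp
    rw [hfe, Finset.sum_singleton, hg0, mul_zero]
    norm_num
  -- per nonzero s value
  have hval : ∀ s ∈ Finset.univ.filter (fun s : Fin m → ZMod 2 => ¬ s = 0),
      (((2:ℝ)^m)⁻¹ * ∑ z : Fin m → ZMod 2, g z * (-1:ℝ)^((∑ i, z i * s i).val))^2
      = (((2:ℝ)^m)⁻¹ * a⁻¹ * (2:ℝ)^n)^2 * (boolFourier f (tmul M s))^2 := by
    intro s hs
    rw [hhat s, if_neg (by simpa using (Finset.mem_filter.mp hs).2), sub_zero]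
    ring
  calc (∑ z : Fin m → ZMod 2, |g z|)^2
      ≤ (2:ℝ)^m * ∑ z : Fin m → ZMod 2, (g z)^2 := hCS
    _ = (2:ℝ)^m * ((2:ℝ)^m * ∑ s : Fin m → ZMod 2,
          (((2:ℝ)^m)⁻¹ * ∑ z : Fin m → ZMod 2, g z * (-1:ℝ)^((∑ i, z i * s i).val))^2) := by
        rw [hPar]
    _ = (2:ℝ)^m * ((2:ℝ)^m * ∑ s ∈ Finset.univ.filter (fun s : Fin m → ZMod 2 => ¬ s = 0),
          (((2:ℝ)^m)⁻¹ * a⁻¹ * (2:ℝ)^n)^2 * (boolFourier f (tmul M s))^2) := by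
        rw [hsplit0, Finset.sum_congr rfl hval]
    _ = (2:ℝ)^(2*n) / a^2 *
          ∑ s ∈ Finset.univ.filter (fun s : Fin m → ZMod 2 => ¬ s = 0),
            (boolFourier f (tmul M s))^2 := by
        rw [Finset.mul_sum, Finset.mul_sum, Finset.mul_sum]
        refine Finset.sum_congr rfl fun s _ => ?_
        have h2m : ((2:ℝ)^m) ≠ 0 := by positivity
        have h2n : (2:ℝ)^(2*n) = ((2:ℝ)^n)^2 := by
          rw [mul_comm, pow_mul]
        rw [h2n]
        field_simp

lemma expectation_eq {m n : ℕ} (hmn : 2 * m ≤ n)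
    (hN : ((Finset.univ.filter fun M : Matrix (Fin m) (Fin n) (ZMod 2) =>
        IsMatchingMatrix M).card : ℝ) ≠ 0)
    (q : (Fin n → ZMod 2) → ℝ) :
    ((Finset.univ.filter fun M : Matrix (Fin m) (Fin n) (ZMod 2) =>
        IsMatchingMatrix M).card : ℝ)⁻¹ *
      ∑ M ∈ Finset.univ.filter (fun M : Matrix (Fin m) (Fin n) (ZMod 2) =>
          IsMatchingMatrix M),
        ∑ s ∈ Finset.univ.filter (fun s : Fin m → ZMod 2 => ¬ s = 0), q (tmul M s)
    = ∑ j ∈ Finset.Icc 1 m,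
        ((Nat.choose m j : ℝ) / (Nat.choose n (2*j) : ℝ)) *
          ∑ v ∈ Finset.univ.filter (fun v : Fin n → ZMod 2 =>
              (Finset.univ.filter fun i => v i ≠ 0).card = 2*j), q v := by
  classical
  set F := Finset.univ.filter fun M : Matrix (Fin m) (Fin n) (ZMod 2) =>
    IsMatchingMatrix M with hF
  set N : ℝ := (F.card : ℝ) with hNN
  -- step 1 : fiber the nonzero s by weight
  have h1 : ∀ M : Matrix (Fin m) (Fin n) (ZMod 2),
      ∑ s ∈ Finset.univ.filter (fun s : Fin m → ZMod 2 => ¬ s = 0), q (tmul M s)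
      = ∑ j ∈ Finset.Icc 1 m,
          ∑ s ∈ Finset.univ.filter (fun s : Fin m → ZMod 2 =>
            (Finset.univ.filter fun ℓ => s ℓ ≠ 0).card = j), q (tmul M s) := by
    intro M
    have hmaps : ∀ s ∈ Finset.univ.filter (fun s : Fin m → ZMod 2 => ¬ s = 0),
        (Finset.univ.filter fun ℓ => s ℓ ≠ 0).card ∈ Finset.Icc 1 m := by
      intro s hs
      have hs0 : s ≠ 0 := by simpa using (Finset.mem_filter.mp hs).2
      rw [Finset.mem_Icc]
      constructor
      · rw [Nat.one_le_iff_ne_zero]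
        intro h0
        apply hs0
        funext ℓ
        by_contra hℓ
        have : ℓ ∈ Finset.univ.filter fun ℓ => s ℓ ≠ 0 :=
          Finset.mem_filter.mpr ⟨Finset.mem_univ _, hℓ⟩
        rw [Finset.card_eq_zero.mp h0] at this
        exact absurd this (Finset.notMem_empty ℓ)
      · calc (Finset.univ.filter fun ℓ => s ℓ ≠ 0).card
            ≤ (Finset.univ : Finset (Fin m)).card := Finset.card_filter_le _ _
          _ = m := by simp
    rw [← Finset.sum_fiberwise_of_maps_to hmaps (fun s => q (tmul M s))]
    refine Finset.sum_congr rfl fun j hj => ?_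
    have hj1 : 1 ≤ j := (Finset.mem_Icc.mp hj).1
    congr 1
    rw [Finset.filter_filter]
    apply Finset.filter_congr
    intro s _
    constructor
    · rintro ⟨_, h⟩; exact h
    · intro h
      refine ⟨?_, h⟩
      intro h0
      subst h0
      rw [show (Finset.univ.filter fun ℓ => (0 : Fin m → ZMod 2) ℓ ≠ 0) = ∅ from by simp] at h
      simp at h
      omega
  -- step 3 : fiber the matchings by tmul
  have h3 : ∀ j ∈ Finset.Icc 1 m, ∀ s : Fin m → ZMod 2,
      (Finset.univ.filter fun ℓ => s ℓ ≠ 0).card = j →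
      ∑ M ∈ F, q (tmul M s)
      = ∑ v ∈ Finset.univ.filter (fun v : Fin n → ZMod 2 =>
            (Finset.univ.filter fun i => v i ≠ 0).card = 2*j),
          (N / (Nat.choose n (2*j) : ℝ)) * q v := by
    intro j hj s hsj
    have hjm : j ≤ m := (Finset.mem_Icc.mp hj).2
    have hmaps : ∀ M ∈ F, tmul M s ∈ Finset.univ.filter (fun v : Fin n → ZMod 2 =>
        (Finset.univ.filter fun i => v i ≠ 0).card = 2*j) := by
      intro M hM
      rw [Finset.mem_filter]
      exact ⟨Finset.mem_univ _, by rw [wt_tmul (Finset.mem_filter.mp hM).2 s, hsj]⟩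
    rw [← Finset.sum_fiberwise_of_maps_to hmaps (fun v => q (tmul v s))]
    refine Finset.sum_congr rfl fun v hv => ?_
    have hinner : ∀ M ∈ F.filter (fun M => tmul M s = v), q (tmul M s) = q v := by
      intro M hM
      rw [(Finset.mem_filter.mp hM).2]
    rw [Finset.sum_congr rfl hinner, Finset.sum_const, nsmul_eq_mul]
    congr 1
    -- card of the fiber
    have hcnt := matchings_card_eq s j hsj v (by simpa using (Finset.mem_filter.mp hv).2)
    have hfe : F.filter (fun M => tmul M s = v)
        = Finset.univ.filter fun M : Matrix (Fin m) (Fin n) (ZMod 2) =>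
            IsMatchingMatrix M ∧ tmul M s = v := by
      rw [hF, Finset.filter_filter]
    have hC : ((Nat.choose n (2*j) : ℕ) : ℝ) ≠ 0 := by
      have : 0 < Nat.choose n (2*j) :=
        Nat.choose_pos (le_trans (by omega : 2*j ≤ 2*m) hmn)
      positivity
    rw [hfe]
    rw [eq_div_iff hC, hNN]
    norm_cast
    rw [hcnt]
    ring
  -- assemble
  have h2 : ∑ M ∈ F, ∑ s ∈ Finset.univ.filter (fun s : Fin m → ZMod 2 => ¬ s = 0),
      q (tmul M s)
      = ∑ j ∈ Finset.Icc 1 m, ∑ s ∈ Finset.univ.filter (fun s : Fin m → ZMod 2 =>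
          (Finset.univ.filter fun ℓ => s ℓ ≠ 0).card = j), ∑ M ∈ F, q (tmul M s) := by
    rw [Finset.sum_congr rfl fun M _ => h1 M, Finset.sum_comm]
    exact Finset.sum_congr rfl fun j _ => Finset.sum_comm
  rw [h2, Finset.mul_sum]
  refine Finset.sum_congr rfl fun j hj => ?_
  have hconst : ∀ s ∈ Finset.univ.filter (fun s : Fin m → ZMod 2 =>
      (Finset.univ.filter fun ℓ => s ℓ ≠ 0).card = j),
      ∑ M ∈ F, q (tmul M s)
      = ∑ v ∈ Finset.univ.filter (fun v : Fin n → ZMod 2 =>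
            (Finset.univ.filter fun i => v i ≠ 0).card = 2*j),
          (N / (Nat.choose n (2*j) : ℝ)) * q v := by
    intro s hs
    exact h3 j hj s (by simpa using (Finset.mem_filter.mp hs).2)
  rw [Finset.sum_congr rfl hconst, Finset.sum_const, nsmul_eq_mul, card_weight]
  have hjm : j ≤ m := (Finset.mem_Icc.mp hj).2
  have hC : ((Nat.choose n (2*j) : ℕ) : ℝ) ≠ 0 := by
    have : 0 < Nat.choose n (2*j) :=
      Nat.choose_pos (le_trans (by omega : 2*j ≤ 2*m) hmn)
    positivity
  rw [← Finset.mul_sum]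
  field_simp

/-- The expected squared total variation distance is bounded by
`(2^{2n}/|A|²) ∑_{even k=2}^{2αn} (C(αn,k/2)/C(n,k)) ∑_{|v|=k} f̂(v)²`
(writing `k = 2j`, `j` ranging over `1,…,m` with `m = αn`). -/
theorem expected_sq_tvd_bound {n m : ℕ} (hm : 0 < m) (h4 : 4 * m ≤ n)
    (c : ℝ) (hc : 1 ≤ c)
    (A : Finset (Fin n → ZMod 2)) (hA : (2 : ℝ) ^ ((n : ℝ) - c) ≤ (A.card : ℝ))
    (f : (Fin n → ZMod 2) → ℝ) (hf : ∀ x, f x = if x ∈ A then 1 else 0) :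
    (((Finset.univ.filter (fun M : Matrix (Fin m) (Fin n) (ZMod 2) =>
          IsMatchingMatrix M)).card : ℝ))⁻¹ *
      ∑ M ∈ Finset.univ.filter (fun M : Matrix (Fin m) (Fin n) (ZMod 2) =>
          IsMatchingMatrix M),
        (∑ z : Fin m → ZMod 2,
          |((A.filter fun x => M.mulVec x = z).card : ℝ) / (A.card : ℝ)
            - ((2 : ℝ) ^ m)⁻¹|) ^ 2
    ≤ (2 : ℝ) ^ (2 * n) / (A.card : ℝ) ^ 2 *
        ∑ j ∈ Finset.Icc 1 m,
          ((Nat.choose m j : ℝ) / (Nat.choose n (2 * j) : ℝ)) *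
            ∑ v ∈ Finset.univ.filter
                (fun v : Fin n → ZMod 2 =>
                  (Finset.univ.filter fun i => v i ≠ 0).card = 2 * j),
              (boolFourier f v) ^ 2 := by
  classical
  by_cases hN : (((Finset.univ.filter (fun M : Matrix (Fin m) (Fin n) (ZMod 2) =>
      IsMatchingMatrix M)).card : ℝ)) = 0
  · rw [hN, inv_zero, zero_mul]
    positivity
  · have hApos : (0:ℝ) < (A.card : ℝ) := lt_of_lt_of_le (by positivity) hA
    have hmn : 2 * m ≤ n := by omega
    have key := expectation_eq hmn hN (fun v => (boolFourier f v)^2)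
    calc (((Finset.univ.filter (fun M : Matrix (Fin m) (Fin n) (ZMod 2) =>
          IsMatchingMatrix M)).card : ℝ))⁻¹ *
        ∑ M ∈ Finset.univ.filter (fun M : Matrix (Fin m) (Fin n) (ZMod 2) =>
            IsMatchingMatrix M),
          (∑ z : Fin m → ZMod 2,
            |((A.filter fun x => M.mulVec x = z).card : ℝ) / (A.card : ℝ)
              - ((2 : ℝ) ^ m)⁻¹|) ^ 2
        ≤ (((Finset.univ.filter (fun M : Matrix (Fin m) (Fin n) (ZMod 2) =>
            IsMatchingMatrix M)).card : ℝ))⁻¹ *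
          ∑ M ∈ Finset.univ.filter (fun M : Matrix (Fin m) (Fin n) (ZMod 2) =>
              IsMatchingMatrix M),
            ((2:ℝ)^(2*n) / (A.card:ℝ)^2 *
              ∑ s ∈ Finset.univ.filter (fun s : Fin m → ZMod 2 => ¬ s = 0),
                (boolFourier f (tmul M s))^2) := by
          apply mul_le_mul_of_nonneg_left
            (Finset.sum_le_sum fun M _ => perM_bound M A hApos f hf)
            (inv_nonneg.mpr (Nat.cast_nonneg _))
      _ = (2:ℝ)^(2*n) / (A.card:ℝ)^2 *
          ((((Finset.univ.filter (fun M : Matrix (Fin m) (Fin n) (ZMod 2) =>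
              IsMatchingMatrix M)).card : ℝ))⁻¹ *
            ∑ M ∈ Finset.univ.filter (fun M : Matrix (Fin m) (Fin n) (ZMod 2) =>
                IsMatchingMatrix M),
              ∑ s ∈ Finset.univ.filter (fun s : Fin m → ZMod 2 => ¬ s = 0),
                (boolFourier f (tmul M s))^2) := by
          rw [← Finset.mul_sum]
          ring
      _ = (2 : ℝ) ^ (2 * n) / (A.card : ℝ) ^ 2 *
          ∑ j ∈ Finset.Icc 1 m,
            ((Nat.choose m j : ℝ) / (Nat.choose n (2 * j) : ℝ)) *
              ∑ v ∈ Finset.univ.filter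
                  (fun v : Fin n → ZMod 2 =>
                    (Finset.univ.filter fun i => v i ≠ 0).card = 2 * j),
                (boolFourier f v) ^ 2 := by
          rw [key]
end

section
/- Let A ⊆ {0,1}^n with |A| ≥ 2^{n-c}, c ≥ 1, α ∈ (0,1/4], and suppose c ≤ γε√(n/α) for a sufficiently small universal constant γ > 0 and ε ∈ (0,1]. Then the tail sum satisfies (2^{2n}/|A|²) ∑_{even k=4c}^{2αn} (C(αn,k/2)/C(n,k)) ∑_{v:|v|=k} f̂(v)² ≤ 2^c · C(αn,2c)/C(n,4c) ≤ (8√2 e α c / n)^{2c} ≤ ε²/2, where f is the characteristic function of A. -/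
/-! Parseval gives `∑_v f̂(v)² = |A|/2ⁿ`, and `j ↦ C(m,j)/C(n,2j)` is non-increasing when
`4m ≤ n`, so the weighted tail is at most its first weight `C(m,2c)/C(n,4c)` times
`2ⁿ/|A| ≤ 2^c`. The bounds `C(m,k) ≤ (em/k)^k` and `(n/k)^k ≤ C(n,k)` turn this into
`(8√2·e·(m/n)·c/n)^{2c}`, whose base is at most `ε/2` as soon as `100·c·√m ≤ ε·n`. -/

open Finset

open scoped Classical

lemma neg_one_pow_val_add (a b : ZMod 2) :
    (-1 : ℝ) ^ (a + b).val = (-1) ^ a.val * (-1) ^ b.val := by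
  rw [ZMod.val_add, ← neg_one_pow_eq_pow_mod_two, pow_add]

lemma neg_one_pow_val_sum {ι : Type*} (s : Finset ι) (g : ι → ZMod 2) :
    (-1 : ℝ) ^ (∑ i ∈ s, g i).val = ∏ i ∈ s, (-1) ^ (g i).val := by
  induction s using Finset.cons_induction with
  | empty => simp
  | cons i s hi ih => rw [sum_cons, prod_cons, neg_one_pow_val_add, ih]

lemma sum_neg_one_pow_val_mul (b : ZMod 2) :
    ∑ a : ZMod 2, (-1 : ℝ) ^ (b * a).val = if b = 0 then 2 else 0 := by
  obtain rfl | rfl : b = 0 ∨ b = 1 := by revert b; decide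
  · norm_num
  · rw [Fintype.sum_eq_add 0 1 (by decide) (by decide)]
    norm_num [ZMod.val_one]

section Walsh

variable {n : ℕ}

noncomputable def walsh (x v : Fin n → ZMod 2) : ℝ := (-1) ^ (∑ i, x i * v i).val

lemma walsh_add_left (x y v : Fin n → ZMod 2) : walsh (x + y) v = walsh x v * walsh y v := by
  simp only [walsh, Pi.add_apply, add_mul, sum_add_distrib, neg_one_pow_val_add]

lemma sum_walsh (x : Fin n → ZMod 2) : ∑ v, walsh x v = if x = 0 then 2 ^ n else 0 := by
  -- the sum factors over the coordinates
  simp only [walsh, neg_one_pow_val_sum]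
  rw [← Fintype.prod_sum (fun i a => (-1 : ℝ) ^ (x i * a).val)]
  simp only [sum_neg_one_pow_val_mul, Fintype.prod_ite_zero, funext_iff]
  simp

lemma boolFourier_eq_sum_walsh (f : (Fin n → ZMod 2) → ℝ) (v : Fin n → ZMod 2) :
    boolFourier f v = ((2 : ℝ) ^ n)⁻¹ * ∑ y, f y * walsh y v := rfl

lemma sum_sq_boolFourier (f : (Fin n → ZMod 2) → ℝ) :
    ∑ v, boolFourier f v ^ 2 = ((2 : ℝ) ^ n)⁻¹ * ∑ x, f x ^ 2 := by
  have hdiag (x y : Fin n → ZMod 2) : x + y = 0 ↔ y = x := by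
    rw [add_eq_zero_iff_eq_neg', ZModModule.neg_eq_self]
  have hsq (v : Fin n → ZMod 2) :
      boolFourier f v ^ 2 = ((2 : ℝ) ^ n)⁻¹ ^ 2 * ∑ x, ∑ y, f x * f y * walsh (x + y) v := by
    rw [boolFourier_eq_sum_walsh, mul_pow, sq (∑ y, f y * walsh y v), sum_mul_sum]
    congr 1
    refine sum_congr rfl fun x _ => sum_congr rfl fun y _ => ?_
    rw [walsh_add_left]
    ring
  calc ∑ v, boolFourier f v ^ 2
      = ((2 : ℝ) ^ n)⁻¹ ^ 2 * ∑ x, ∑ y, f x * f y * ∑ v, walsh (x + y) v := by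
        simp only [hsq, ← mul_sum]
        rw [sum_comm]
        refine congrArg _ (sum_congr rfl fun x _ => ?_)
        rw [sum_comm]
        simp only [mul_sum]
    _ = ((2 : ℝ) ^ n)⁻¹ * ∑ x, f x ^ 2 := by
        simp only [sum_walsh, hdiag, mul_ite, mul_zero, sum_ite_eq', mem_univ, if_true, ← sum_mul]
        field_simp
end Walsh

namespace Nat

lemma choose_add_two_mul (n k : ℕ) :
    n.choose (k + 2) * ((k + 1) * (k + 2)) = n.choose k * ((n - k) * (n - (k + 1))) := by
  linear_combination
    (k + 1) * choose_succ_right_eq n (k + 1) + (n - (k + 1)) * choose_succ_right_eq n k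

lemma choose_succ_mul_choose_two_mul_le {m n j : ℕ} (hj : j < m) (hmn : 4 * m ≤ n) :
    m.choose (j + 1) * n.choose (2 * j) ≤ m.choose j * n.choose (2 * j + 2) := by
  have key : 2 * (m - j) * (2 * j + 1) ≤ (n - 2 * j) * (n - (2 * j + 1)) :=
    Nat.mul_le_mul (by omega) (by omega)
  refine Nat.le_of_mul_le_mul_right (c := (j + 1) * ((2 * j + 1) * (2 * j + 2))) ?_ (by positivity)
  calc m.choose (j + 1) * n.choose (2 * j) * ((j + 1) * ((2 * j + 1) * (2 * j + 2)))
      = m.choose j * n.choose (2 * j) * ((m - j) * ((2 * j + 1) * (2 * j + 2))) := by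
        linear_combination n.choose (2 * j) * ((2 * j + 1) * (2 * j + 2)) * choose_succ_right_eq m j
    _ = m.choose j * n.choose (2 * j) * ((j + 1) * (2 * (m - j) * (2 * j + 1))) := by ring
    _ ≤ m.choose j * n.choose (2 * j) * ((j + 1) * ((n - 2 * j) * (n - (2 * j + 1)))) := by
        gcongr
    _ = m.choose j * n.choose (2 * j + 2) * ((j + 1) * ((2 * j + 1) * (2 * j + 2))) := by
        linear_combination (m.choose j * (j + 1)) * (choose_add_two_mul n (2 * j)).symm

end Nat

lemma antitone_choose_div_choose_two_mul {m n : ℕ} (hmn : 4 * m ≤ n) :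
    Antitone fun j => (m.choose j : ℝ) / n.choose (2 * j) := by
  refine antitone_nat_of_succ_le fun j => ?_
  rcases lt_or_ge j m with hj | hj
  · have hpos (i : ℕ) (hi : i ≤ 2 * m) : (0 : ℝ) < n.choose i := by
      exact_mod_cast Nat.choose_pos (by omega)
    rw [div_le_div_iff₀ (hpos _ (by omega)) (hpos _ (by omega)), mul_add_one 2 j]
    exact_mod_cast Nat.choose_succ_mul_choose_two_mul_le hj hmn
  · rw [Nat.choose_eq_zero_of_lt (by omega : m < j + 1), Nat.cast_zero, zero_div]
    positivity

lemma choose_le_exp_mul_div_pow (m k : ℕ) :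
    (m.choose k : ℝ) ≤ (Real.exp 1 * m / k) ^ k := by
  have hk : (k : ℝ) ^ k / k.factorial ≤ Real.exp 1 ^ k := by
    simpa [← Real.exp_nat_mul] using Real.pow_div_factorial_le_exp (k : ℝ) k.cast_nonneg k
  calc (m.choose k : ℝ) ≤ (m : ℝ) ^ k / k.factorial := Nat.choose_le_pow_div k m
    _ = ((m : ℝ) / k) ^ k * ((k : ℝ) ^ k / k.factorial) := by
        rcases k.eq_zero_or_pos with rfl | hk0
        · simp
        · rw [mul_div_assoc', ← mul_pow, div_mul_cancel₀ _ (by positivity)]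
    _ ≤ ((m : ℝ) / k) ^ k * Real.exp 1 ^ k := by gcongr
    _ = (Real.exp 1 * m / k) ^ k := by rw [← mul_pow]; ring

lemma div_pow_le_choose {n k : ℕ} (hkn : k ≤ n) : ((n : ℝ) / k) ^ k ≤ n.choose k := by
  have hfac : (0 : ℝ) < k.factorial := by exact_mod_cast k.factorial_pos
  rw [← mul_le_mul_iff_of_pos_right hfac]
  have hC : (n.choose k : ℝ) * k.factorial = ∏ i ∈ range k, ((n - i : ℕ) : ℝ) := by
    rw [← Nat.cast_mul, mul_comm, ← Nat.descFactorial_eq_factorial_mul_choose,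
      Nat.descFactorial_eq_prod_range, Nat.cast_prod]
  have hF : (k.factorial : ℝ) = ∏ i ∈ range k, ((k - i : ℕ) : ℝ) := by
    rw [← Nat.cast_prod, ← Nat.descFactorial_eq_prod_range, Nat.descFactorial_self]
  have hpow : ((n : ℝ) / k) ^ k = ∏ _i ∈ range k, ((n : ℝ) / k) := by
    rw [prod_const, card_range]
  rw [hC, hF, hpow, ← prod_mul_distrib]
  refine prod_le_prod (fun i _ => by positivity) fun i hi => ?_
  have hik : i < k := mem_range.mp hi
  have hkR : (0 : ℝ) < k := by exact_mod_cast (i.zero_le.trans_lt hik)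
  rw [Nat.cast_sub hik.le, Nat.cast_sub (hik.le.trans hkn), div_mul_eq_mul_div, div_le_iff₀ hkR]
  have : (k : ℝ) ≤ n := by exact_mod_cast hkn
  nlinarith [i.cast_nonneg (α := ℝ)]

lemma sum_sum_filter_eq_le_sum {α ι κ : Type*} [Fintype α] [DecidableEq κ] {w : α → κ}
    {e : ι → κ} (he : Function.Injective e) {g : α → ℝ} (hg : ∀ a, 0 ≤ g a) (s : Finset ι) :
    ∑ j ∈ s, ∑ a ∈ univ.filter (fun a => w a = e j), g a ≤ ∑ a, g a := by
  rw [← sum_image (f := fun k => ∑ a ∈ univ.filter (fun a => w a = k), g a) he.injOn]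
  exact sum_fiberwise_le_sum_of_sum_fiber_nonneg fun _ _ => sum_nonneg fun a _ => hg a

lemma weighted_level_sum_sq_boolFourier_le {m n : ℕ} (hmn : 4 * m ≤ n)
    (f : (Fin n → ZMod 2) → ℝ) {a : ℕ} {s : Finset ℕ} (hs : ∀ j ∈ s, a ≤ j) :
    ∑ j ∈ s, (m.choose j : ℝ) / n.choose (2 * j) *
        ∑ v ∈ univ.filter (fun v : Fin n → ZMod 2 => (univ.filter fun i => v i ≠ 0).card = 2 * j),
          boolFourier f v ^ 2
      ≤ (m.choose a : ℝ) / n.choose (2 * a) * (((2 : ℝ) ^ n)⁻¹ * ∑ x, f x ^ 2) := by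
  have hr := antitone_choose_div_choose_two_mul hmn
  calc _ ≤ ∑ j ∈ s, (m.choose a : ℝ) / n.choose (2 * a) *
          ∑ v ∈ univ.filter (fun v : Fin n → ZMod 2 => (univ.filter fun i => v i ≠ 0).card = 2 * j),
            boolFourier f v ^ 2 :=
        sum_le_sum fun j hj => mul_le_mul_of_nonneg_right (hr (hs j hj))
          (sum_nonneg fun v _ => sq_nonneg _)
    _ ≤ (m.choose a : ℝ) / n.choose (2 * a) * ∑ v, boolFourier f v ^ 2 := by
        rw [← mul_sum]
        exact mul_le_mul_of_nonneg_left
          (sum_sum_filter_eq_le_sum (mul_right_injective₀ two_ne_zero) (fun v => sq_nonneg _) s)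
          (by positivity)
    _ = _ := by rw [sum_sq_boolFourier]

lemma indicator_fourier_tail_le {n m c : ℕ} {A : Finset (Fin n → ZMod 2)}
    {f : (Fin n → ZMod 2) → ℝ} (hmn : 4 * m ≤ n) (hA : (2 : ℝ) ^ n / 2 ^ c ≤ A.card)
    (hf : ∀ x, f x = if x ∈ A then 1 else 0) :
    (2 : ℝ) ^ (2 * n) / (A.card : ℝ) ^ 2 *
        ∑ j ∈ Icc (2 * c) m, (m.choose j : ℝ) / n.choose (2 * j) *
          ∑ v ∈ univ.filter (fun v : Fin n → ZMod 2 => (univ.filter fun i => v i ≠ 0).card = 2 * j),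
            boolFourier f v ^ 2
      ≤ 2 ^ c * ((m.choose (2 * c) : ℝ) / n.choose (4 * c)) := by
  have hcard : ∑ x, f x ^ 2 = A.card := by
    simp [hf, sum_ite_mem]
  have hApos : (0 : ℝ) < A.card := lt_of_lt_of_le (by positivity) hA
  have hdensity : (2 : ℝ) ^ n / A.card ≤ 2 ^ c := by
    rw [div_le_iff₀ hApos]; rw [div_le_iff₀ (by positivity)] at hA; linarith
  have hlevels := weighted_level_sum_sq_boolFourier_le hmn f (a := 2 * c) (s := Icc (2 * c) m)
    fun j hj => (mem_Icc.mp hj).1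
  rw [hcard, show 2 * (2 * c) = 4 * c by ring] at hlevels
  calc _ ≤ (2 : ℝ) ^ (2 * n) / (A.card : ℝ) ^ 2 *
        ((m.choose (2 * c) : ℝ) / n.choose (4 * c) * (((2 : ℝ) ^ n)⁻¹ * A.card)) := by
        gcongr
    _ = (2 : ℝ) ^ n / A.card * ((m.choose (2 * c) : ℝ) / n.choose (4 * c)) := by
        rw [pow_mul', sq]; field_simp
    _ ≤ _ := by gcongr

lemma two_pow_mul_choose_div_choose_le {m n c : ℕ} (hc : 0 < c) (hcn : 4 * c ≤ n) :
    2 ^ c * ((m.choose (2 * c) : ℝ) / n.choose (4 * c))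
      ≤ (8 * Real.sqrt 2 * Real.exp 1 * ((m : ℝ) / n) * c / n) ^ (2 * c) := by
  have hn : (0 : ℝ) < n := by exact_mod_cast (show 0 < n by omega)
  have hcR : (0 : ℝ) < c := by exact_mod_cast hc
  have hchoose : (0 : ℝ) < n.choose (4 * c) := by exact_mod_cast Nat.choose_pos hcn
  have hbase : Real.sqrt 2 * (Real.exp 1 * m / (2 * c : ℕ)) =
      8 * Real.sqrt 2 * Real.exp 1 * ((m : ℝ) / n) * c / n * ((n : ℝ) / (4 * c : ℕ)) ^ 2 := by
    push_cast; field_simp; ring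
  rw [← mul_div_assoc, div_le_iff₀ hchoose]
  calc (2 : ℝ) ^ c * m.choose (2 * c)
      ≤ Real.sqrt 2 ^ (2 * c) * (Real.exp 1 * m / (2 * c : ℕ)) ^ (2 * c) := by
        rw [pow_mul, Real.sq_sqrt zero_le_two]
        gcongr
        exact choose_le_exp_mul_div_pow m (2 * c)
    _ = (8 * Real.sqrt 2 * Real.exp 1 * ((m : ℝ) / n) * c / n) ^ (2 * c) *
          ((n : ℝ) / (4 * c : ℕ)) ^ (4 * c) := by
        rw [← mul_pow, hbase, mul_pow, ← pow_mul, show 2 * (2 * c) = 4 * c by ring]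
    _ ≤ _ := by gcongr; exact div_pow_le_choose hcn

lemma sqrt_div_div_self (m : ℝ) {n : ℝ} (hn : 0 ≤ n) :
    Real.sqrt (n / (m / n)) = n / Real.sqrt m := by
  rw [div_div_eq_mul_div, Real.sqrt_div (mul_self_nonneg n), Real.sqrt_mul_self hn]

lemma eight_sqrt_two_exp_mul_div_le_half {m n c : ℕ} {ε : ℝ} (hm : 0 < m) (hmn : m ≤ n)
    (hc : 100 * c * Real.sqrt m ≤ ε * n) :
    8 * Real.sqrt 2 * Real.exp 1 * ((m : ℝ) / n) * c / n ≤ ε / 2 := by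
  have hn : (0 : ℝ) < n := by exact_mod_cast (show 0 < n by omega)
  have hsqrt : Real.sqrt m ≤ n := Real.sqrt_le_iff.mpr ⟨hn.le, by exact_mod_cast (by nlinarith)⟩
  have hconst : 8 * Real.sqrt 2 * Real.exp 1 ≤ 50 := by
    have h2 : Real.sqrt 2 ≤ 3 / 2 := Real.sqrt_le_iff.mpr ⟨by norm_num, by norm_num⟩
    have he : Real.exp 1 ≤ 3 := Real.exp_one_lt_d9.le.trans (by norm_num)
    nlinarith [Real.sqrt_nonneg 2, Real.exp_pos 1]
  have hm' : (m : ℝ) = Real.sqrt m * Real.sqrt m := (Real.mul_self_sqrt m.cast_nonneg).symm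
  calc 8 * Real.sqrt 2 * Real.exp 1 * ((m : ℝ) / n) * c / n
      = 8 * Real.sqrt 2 * Real.exp 1 * (Real.sqrt m * (c * Real.sqrt m)) / (n * n) := by
        conv_lhs => rw [hm']
        field_simp
    _ ≤ 50 * (n * (ε * n / 100)) / (n * n) := by
        gcongr; linarith
    _ = ε / 2 := by field_simp; ring

/-- Here `k = 2j` and `m = αn`, so that `α = m/n`. -/
theorem tail_sum_bound :
    ∃ γ : ℝ, 0 < γ ∧
      ∀ (n m c : ℕ) (ε : ℝ) (A : Finset (Fin n → ZMod 2))
        (f : (Fin n → ZMod 2) → ℝ),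
        0 < m → 4 * m ≤ n → 1 ≤ c →
        (2 : ℝ) ^ (n : ℝ) / (2 : ℝ) ^ (c : ℝ) ≤ (A.card : ℝ) →
        0 < ε → ε ≤ 1 →
        (c : ℝ) ≤ γ * ε * Real.sqrt ((n : ℝ) / ((m : ℝ) / (n : ℝ))) →
        (∀ x, f x = if x ∈ A then 1 else 0) →
        ((2 : ℝ) ^ (2 * n) / (A.card : ℝ) ^ 2 *
            ∑ j ∈ Finset.Icc (2 * c) m,
              ((Nat.choose m j : ℝ) / (Nat.choose n (2 * j) : ℝ)) *
                ∑ v ∈ Finset.univ.filter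
                    (fun v : Fin n → ZMod 2 =>
                      (Finset.univ.filter fun i => v i ≠ 0).card = 2 * j),
                  (boolFourier f v) ^ 2
          ≤ (2 : ℝ) ^ c * ((Nat.choose m (2 * c) : ℝ) / (Nat.choose n (4 * c) : ℝ)))
        ∧ ((2 : ℝ) ^ c * ((Nat.choose m (2 * c) : ℝ) / (Nat.choose n (4 * c) : ℝ))
          ≤ (8 * Real.sqrt 2 * Real.exp 1 * ((m : ℝ) / (n : ℝ)) * (c : ℝ) / (n : ℝ)) ^ (2 * c))
        ∧ ((8 * Real.sqrt 2 * Real.exp 1 * ((m : ℝ) / (n : ℝ)) * (c : ℝ) / (n : ℝ)) ^ (2 * c)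
          ≤ ε ^ 2 / 2) := by
  -- any `γ` with `8√2·e·γ ≤ 1/2` would do
  refine ⟨1 / 100, by norm_num, fun n m c ε A f hm hmn hc hA hε hε1 hγ hf => ?_⟩
  have hsqrt_m : 1 ≤ Real.sqrt m := Real.one_le_sqrt.mpr (by exact_mod_cast hm)
  have hcm : 100 * c * Real.sqrt m ≤ ε * n := by
    rw [sqrt_div_div_self _ n.cast_nonneg, mul_div_assoc', le_div_iff₀ (by positivity)] at hγ
    linarith
  have hcn : 4 * c ≤ n := by
    have : (100 * c : ℝ) ≤ n := by nlinarith [c.cast_nonneg (α := ℝ), n.cast_nonneg (α := ℝ)]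
    exact_mod_cast (show (4 * c : ℝ) ≤ n by linarith)
  have hbase := eight_sqrt_two_exp_mul_div_le_half hm (by omega) hcm
  refine ⟨indicator_fourier_tail_le hmn (by simpa only [Real.rpow_natCast] using hA) hf,
    two_pow_mul_choose_div_choose_le hc hcn, ?_⟩
  calc _ ≤ (ε / 2) ^ (2 * c) := by gcongr
    _ ≤ (ε / 2) ^ 2 := pow_le_pow_of_le_one (by positivity) (by linarith) (by omega)
    _ ≤ ε ^ 2 / 2 := by nlinarith
end
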